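/- Suppose 0 < ε < 1/4. For any E ∈ 𝓛 of arity n and any ε-excellent A_0, …, A_{n−1} ∈ M̂∖M, the value Ê^m̄_ε(A_0, …, A_{n−1}) is an element of {⊤,⊥} and is the same for every enumeration m̄ of {0,…,n−1} (this common value is denoted Ê_ε(A_0,…,A_{n−1})). -/

import Mathlib

open scoped Classical

noncomputable section

/-- Truth values: true, false, and indeterminate. -/
inductive TV where
  | top : TV
  | bot : TV
  | up  : TV
deriving DecidableEq

/-- A finite relational language. -/
structure RelLanguage where
  Symb : Type
  [fintypeSymb : Fintype Symb]
  arity : Symb → ℕ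

attribute [instance] RelLanguage.fintypeSymb

/-- `q_𝓛`, the maximal arity of a relation symbol. -/
def RelLanguage.q (L : RelLanguage) : ℕ := Finset.univ.sup L.arity

/-- `n_𝓛 = |𝓛| ⬝ q_𝓛`. -/
def RelLanguage.nL (L : RelLanguage) : ℕ := Fintype.card L.Symb * L.q

/-- A structure for a finite relational language, on underlying set `M`. -/
structure RelStructure (L : RelLanguage) (M : Type*) where
  rel : ∀ E : L.Symb, (Fin (L.arity E) → M) → Bool

/-- `M̂ = M ∪ 𝒫(M)`: an argument is either an element of `M` or a subset of `M`. -/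
abbrev Arg (M : Type*) := M ⊕ Finset M

/-- Membership of an element in an argument: equality for elements, membership for sets. -/
def Arg.mem {M : Type*} (a : M) : Arg M → Prop
  | Sum.inl b => a = b
  | Sum.inr s => a ∈ s

/-- The size of an argument: `1` for an element, the cardinality for a set. -/
def Arg.size {M : Type*} : Arg M → ℕ
  | Sum.inl _ => 1
  | Sum.inr s => s.card

variable {M : Type*} [Fintype M] [DecidableEq M]

/-- The ε-partial relation `Ê^m̄_ε`, where the list of indices is given in
*polling order*: the head of the list is the index polled first (outermost),
i.e. the list is the *reverse* of the tuple `m̄` of the paper. -/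
def pollAux (ε : ℝ) {n : ℕ} (R : (Fin n → M) → Bool) :
    List (Fin n) → (Fin n → Arg M) → TV
  | [], A =>
      if h : ∃ f : Fin n → M, ∀ i, A i = Sum.inl (f i) then
        (if R (Classical.choose h) then TV.top else TV.bot)
      else TV.up
  | j :: rest, A =>
      match A j with
      | Sum.inl _ => TV.up
      | Sum.inr Aj =>
          if (((Aj.filter fun a =>
                pollAux ε R rest (Function.update A j (Sum.inl a)) = TV.top).card : ℝ)
              > (1 - ε) * (Aj.card : ℝ)) then TV.top
          else if (((Aj.filter fun a =>
                pollAux ε R rest (Function.update A j (Sum.inl a)) = TV.bot).card : ℝ)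
              > (1 - ε) * (Aj.card : ℝ)) then TV.bot
          else TV.up

/-- The ε-partial relation `Ê^m̄_ε`, with `m̄` given in the paper's order
(the *last* entry of `m̄` is the index polled first). -/
def partialRel (ε : ℝ) {n : ℕ} (R : (Fin n → M) → Bool)
    (mbar : List (Fin n)) (A : Fin n → Arg M) : TV :=
  pollAux ε R mbar.reverse A

/-- The value `Ê^{⟨σ⁻¹(l-1),…,σ⁻¹(1),σ⁻¹(0)⟩}_ε (A_{σ(0)}, …, A_{σ(n-1)})`. -/
def pollValue (ε : ℝ) {n : ℕ} (R : (Fin n → M) → Bool) (l : ℕ)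
    (σ : Equiv.Perm (Fin n)) (A : Fin n → Arg M) : TV :=
  pollAux ε R (((List.finRange n).take l).map σ.symm) fun i => A (σ i)

/-- `(ε, ℓ, E)`-goodness of an argument, for the relation `R` interpreting `E`. -/
def IsGood (ε : ℝ) {n : ℕ} (R : (Fin n → M) → Bool) : ℕ → Arg M → Prop
  | 0, A₀ => A₀.isLeft = true
  | (m+1), A₀ =>
      (∀ k, 1 ≤ k → k < m + 1 → IsGood ε R k A₀) ∧
      (∀ (A : Fin n → Arg M) (σ : Equiv.Perm (Fin n)),
        (∀ i : Fin n, (i : ℕ) = 0 → A i = A₀) →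
        (∀ i : Fin n, 1 ≤ (i : ℕ) → (i : ℕ) < m + 1 →
            (A i).isRight = true ∧ IsGood ε R (m + 1 - (i : ℕ)) (A i)) →
        (∀ i : Fin n, m + 1 ≤ (i : ℕ) → (A i).isLeft = true) →
        pollValue ε R (m + 1) σ A ≠ TV.up)
  termination_by l _ => l
  decreasing_by all_goals omega

/-- `A` is ε-excellent: `(ε, arity(E), E)`-good for every relation symbol `E`. -/
def IsExcellent (ε : ℝ) {L : RelLanguage} (𝓜 : RelStructure L M) (A : Arg M) : Prop :=
  ∀ E : L.Symb, IsGood ε (𝓜.rel E) (L.arity E) A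

/-- `P` is a partition of the finite set `S`. -/
def IsPartition {V : Type*} [DecidableEq V] (P : Finset (Finset V)) (S : Finset V) : Prop :=
  (∀ p ∈ P, p.Nonempty) ∧
  (∀ p ∈ P, ∀ q ∈ P, p ≠ q → Disjoint p q) ∧
  (∀ x, x ∈ S ↔ ∃ p ∈ P, x ∈ p)

/-- A partition is equitable when any two parts differ in size by at most 1. -/
def IsEquitable {V : Type*} (P : Finset (Finset V)) : Prop :=
  ∀ p ∈ P, ∀ q ∈ P, p.card ≤ q.card + 1

/-- Indivisibility of a partition with respect to a single relation. -/
def IndivisibleRel {n : ℕ} (P : Finset (Finset M)) (R : (Fin n → M) → Bool) : Prop :=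
  ∀ p : Fin n → Finset M, (∀ i, p i ∈ P) →
    ∀ a b : Fin n → M, (∀ i, a i ∈ p i) → (∀ i, b i ∈ p i) → R a = R b

/-- Indivisibility of a partition with respect to a structure. -/
def Indivisible {L : RelLanguage} (P : Finset (Finset M)) (𝓝 : RelStructure L M) : Prop :=
  ∀ E : L.Symb, IndivisibleRel P (𝓝.rel E)

/-- The τ-branching property for an `n`-ary relation `R` with the variable partition
`(x_ℓ; the remaining variables)`. -/
def RelBranching {n : ℕ} (R : (Fin n → M) → Bool) (ℓ : Fin n) (τ : ℕ) : Prop :=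
  ∃ (a : List Bool → M) (b : List Bool → (Fin n → M)),
    ∀ i : List Bool, i.length = τ →
      ∀ j : List Bool, j.length < τ → ∀ h : Bool,
        (j ++ [h]) <+: i → (R (Function.update (b j) ℓ (a i)) = h)

/-- `𝓜` does not have the τ-branching property (for any relation symbol and
any singleton variable partition). -/
def NonBranching {L : RelLanguage} (𝓜 : RelStructure L M) (τ : ℕ) : Prop :=
  ∀ (E : L.Symb) (j : Fin (L.arity E)), ¬ RelBranching (𝓜.rel E) j τ

/-- `g = ⌈5 ⬝ n_𝓛 ⬝ τ̂ ⬝ log₂ τ̂⌉`. -/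
def gBound (L : RelLanguage) (τ : ℕ) : ℕ :=
  ⌈5 * (L.nL : ℝ) * (τ : ℝ) * Real.logb 2 (τ : ℝ)⌉₊

/-- A staircase `⟨m_j⟩_{j ≤ k}`. -/
def Staircase (ε : ℝ) (ms : ℕ → ℕ) (k : ℕ) : Prop :=
  (∀ j ≤ k, 0 < ms j) ∧ ∀ j < k, (ms (j + 1) : ℝ) ≤ ε * (ms j : ℝ)

end

/-! Polling excellent sets along an enumeration never returns `↑`: this is what goodness of the
first polled set says, once the enumeration is realised by a permutation of the positions.
Two enumerations differ by adjacent transpositions, and swapping two adjacent polls cannot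
turn `⊤` into `⊥`: otherwise, on the product of the two polled sets, the points where the
remaining polls give `⊤` and those where they give `⊥` would each have density more than
`(1 - ε) ^ 2 > 1 / 2`. -/

open Finset Function

namespace Finset

variable {α β : Type*} {ε : ℝ}

theorem sq_mul_card_mul_card_lt_sum_card_filter {S G : Finset α} {T : Finset β}
    {P : α → β → Prop} [∀ a b, Decidable (P a b)] (hε : ε ≤ 1) (hGS : G ⊆ S)
    (hG : (1 - ε) * #S < #G) (hP : ∀ a ∈ G, (1 - ε) * #T < #{b ∈ T | P a b}) :
    (1 - ε) ^ 2 * (#S * #T) < ∑ a ∈ S, (#{b ∈ T | P a b} : ℝ) := by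
  have hGne : G.Nonempty := card_pos.1 <| by
    exact_mod_cast (mul_nonneg (by linarith) (Nat.cast_nonneg _)).trans_lt hG
  calc (1 - ε) ^ 2 * (#S * #T) = (1 - ε) * #S * ((1 - ε) * #T) := by ring
    _ ≤ #G * ((1 - ε) * #T) := by gcongr
    _ = ∑ _a ∈ G, (1 - ε) * (#T : ℝ) := by rw [sum_const, nsmul_eq_mul]
    _ < ∑ a ∈ G, (#{b ∈ T | P a b} : ℝ) := sum_lt_sum_of_nonempty hGne hP
    _ ≤ ∑ a ∈ S, (#{b ∈ T | P a b} : ℝ) :=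
      sum_le_sum_of_subset_of_nonneg hGS fun _ _ _ ↦ by positivity

theorem sum_card_filter_add_sum_card_filter_le {S : Finset α} {T : Finset β}
    {P Q : α → β → Prop} [∀ a b, Decidable (P a b)] [∀ a b, Decidable (Q a b)]
    (hPQ : ∀ a b, P a b → ¬ Q a b) :
    ∑ a ∈ S, #{b ∈ T | P a b} + ∑ b ∈ T, #{a ∈ S | Q a b} ≤ #S * #T := by
  have hswap : ∑ b ∈ T, #{a ∈ S | Q a b} = ∑ a ∈ S, #{b ∈ T | Q a b} :=
    (sum_card_bipartiteAbove_eq_sum_card_bipartiteBelow Q).symm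
  rw [hswap, ← sum_add_distrib, ← smul_eq_mul, ← sum_const]
  refine sum_le_sum fun a _ ↦ ?_
  calc #{b ∈ T | P a b} + #{b ∈ T | Q a b} ≤ #{b ∈ T | P a b} + #{b ∈ T | ¬ P a b} := by
        gcongr with b
        exact fun hQ hP ↦ hPQ a b hP hQ
    _ = #T := card_filter_add_card_filter_not _

-- Each of `P` and `Q` would cover more than `(1 - ε) ^ 2 > 1 / 2` of the grid `S × T`.
theorem false_of_majority_of_majority {S G : Finset α} {T H : Finset β}
    {P Q : α → β → Prop} [∀ a b, Decidable (P a b)] [∀ a b, Decidable (Q a b)]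
    (hε : ε < 1 / 4) (hPQ : ∀ a b, P a b → ¬ Q a b) (hGS : G ⊆ S) (hHT : H ⊆ T)
    (hG : (1 - ε) * #S < #G) (hP : ∀ a ∈ G, (1 - ε) * #T < #{b ∈ T | P a b})
    (hH : (1 - ε) * #T < #H) (hQ : ∀ b ∈ H, (1 - ε) * #S < #{a ∈ S | Q a b}) : False := by
  have hPsum := sq_mul_card_mul_card_lt_sum_card_filter (by linarith) hGS hG hP
  have hQsum := sq_mul_card_mul_card_lt_sum_card_filter (P := fun b a ↦ Q a b)
    (by linarith) hHT hH hQ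
  have htotal : (∑ a ∈ S, (#{b ∈ T | P a b} : ℝ)) + ∑ b ∈ T, (#{a ∈ S | Q a b} : ℝ)
      ≤ #S * #T := by
    exact_mod_cast sum_card_filter_add_sum_card_filter_le (S := S) (T := T) hPQ
  have hgrid : (0 : ℝ) ≤ #S * #T := by positivity
  nlinarith [mul_nonneg (show (0 : ℝ) ≤ 2 * (1 - ε) ^ 2 - 1 by nlinarith) hgrid]

end Finset

theorem List.exists_perm_map_take_finRange {n : ℕ} {l : List (Fin n)} (hl : l.Nodup) :
    ∃ σ : Equiv.Perm (Fin n), ((List.finRange n).take l.length).map σ = l := by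
  set l' := l ++ (List.finRange n).filter (· ∉ l)
  have hnd : l'.Nodup :=
    hl.append ((List.nodup_finRange n).filter _) fun a ha ha' ↦ by simp_all
  have hall : ∀ i, i ∈ l' := fun i ↦ by by_cases i ∈ l <;> simp [l', *]
  have hlen : l'.length = n := by
    have hperm := (List.perm_ext_iff_of_nodup hnd (List.nodup_finRange n)).2 (by simp [hall])
    simpa using hperm.length_eq
  refine ⟨(finCongr hlen.symm).trans (hnd.getEquivOfForallMemList l' hall), ?_⟩
  have hln : l.length ≤ n := by simpa using hl.length_le_card
  apply List.ext_getElem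
  · simpa using hln
  · intro i h₁ h₂
    simp [l', List.getElem_append_left h₂]

section Polling

variable {M : Type*} [Fintype M] [DecidableEq M] {n : ℕ} {ε : ℝ} {R : (Fin n → M) → Bool}
  {l : List (Fin n)} {C : Fin n → Arg M}

theorem IsGood.of_le {m k : ℕ} {X : Arg M} (h : IsGood ε R m X) (hk : 1 ≤ k) (hkm : k ≤ m) :
    IsGood ε R k X := by
  obtain rfl | hlt := hkm.eq_or_lt
  · exact h
  obtain ⟨m, rfl⟩ : ∃ m', m = m' + 1 := ⟨m - 1, by omega⟩
  rw [IsGood] at h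
  exact h.1 k hk hlt

theorem lt_card_filter_of_pollAux_cons_eq_top {j : Fin n} {u : List (Fin n)} {S : Finset M}
    (hS : C j = .inr S) (h : pollAux ε R (j :: u) C = .top) :
    (1 - ε) * #S < #{a ∈ S | pollAux ε R u (update C j (.inl a)) = .top} := by
  rw [pollAux, hS] at h
  dsimp only at h
  split_ifs at h with h₁
  exact h₁

theorem lt_card_filter_of_pollAux_cons_eq_bot {j : Fin n} {u : List (Fin n)} {S : Finset M}
    (hS : C j = .inr S) (h : pollAux ε R (j :: u) C = .bot) :
    (1 - ε) * #S < #{a ∈ S | pollAux ε R u (update C j (.inl a)) = .bot} := by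
  rw [pollAux, hS] at h
  dsimp only at h
  split_ifs at h with h₁ h₂
  exact h₂

theorem pollAux_swap_ne_top_bot (hε : ε < 1 / 4) {j k : Fin n} {u : List (Fin n)}
    {Sj Sk : Finset M} (hjk : j ≠ k) (hj : C j = .inr Sj) (hk : C k = .inr Sk)
    (htop : pollAux ε R (j :: k :: u) C = .top) (hbot : pollAux ε R (k :: j :: u) C = .bot) :
    False := by
  set f : M → M → TV := fun a b ↦ pollAux ε R u (update (update C j (.inl a)) k (.inl b))
  refine false_of_majority_of_majority hε (P := fun a b ↦ f a b = .top)
    (Q := fun a b ↦ f a b = .bot) (fun a b h ↦ by simp [h]) (filter_subset _ _)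
    (filter_subset _ _) (lt_card_filter_of_pollAux_cons_eq_top hj htop) (fun a ha ↦ ?_)
    (lt_card_filter_of_pollAux_cons_eq_bot hk hbot) (fun b hb ↦ ?_)
  · exact lt_card_filter_of_pollAux_cons_eq_top (by rw [update_of_ne hjk.symm, hk])
      (mem_filter.1 ha).2
  · simpa only [f, update_comm hjk] using lt_card_filter_of_pollAux_cons_eq_bot
      (by rw [update_of_ne hjk, hj]) (mem_filter.1 hb).2

theorem pollAux_swap (hε : ε < 1 / 4) {j k : Fin n} {u : List (Fin n)} {Sj Sk : Finset M}
    (hjk : j ≠ k) (hj : C j = .inr Sj) (hk : C k = .inr Sk)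
    (h₁ : pollAux ε R (j :: k :: u) C ≠ .up) (h₂ : pollAux ε R (k :: j :: u) C ≠ .up) :
    pollAux ε R (j :: k :: u) C = pollAux ε R (k :: j :: u) C := by
  cases hv₁ : pollAux ε R (j :: k :: u) C <;> cases hv₂ : pollAux ε R (k :: j :: u) C
  all_goals first
    | rfl
    | exact absurd hv₁ h₁
    | exact absurd hv₂ h₂
    | exact (pollAux_swap_ne_top_bot hε hjk hj hk hv₁ hv₂).elim
    | exact (pollAux_swap_ne_top_bot hε hjk.symm hk hj hv₂ hv₁).elim

def GoodConfig (ε : ℝ) (R : (Fin n → M) → Bool) (l : List (Fin n)) (C : Fin n → Arg M) :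
    Prop :=
  (∀ i ∈ l, ∃ S : Finset M, C i = .inr S ∧ IsGood ε R n (.inr S)) ∧
  (∀ i ∉ l, (C i).isLeft)

theorem GoodConfig.update_cons {x : Fin n} {a : M} (hx : x ∉ l)
    (hC : GoodConfig ε R (x :: l) C) : GoodConfig ε R l (update C x (.inl a)) := by
  refine ⟨fun i hi ↦ ?_, fun i hi ↦ ?_⟩
  · rw [update_of_ne (by rintro rfl; exact hx hi)]
    exact hC.1 i (List.mem_cons_of_mem x hi)
  · by_cases hix : i = x
    · subst hix; simp
    · rw [update_of_ne hix]
      exact hC.2 i (by simp [hi, hix])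

theorem GoodConfig.perm {l' : List (Fin n)} (hp : l.Perm l') (hC : GoodConfig ε R l C) :
    GoodConfig ε R l' C :=
  ⟨fun i hi ↦ hC.1 i (hp.mem_iff.2 hi), fun i hi ↦ hC.2 i (hi ∘ hp.mem_iff.1)⟩

theorem GoodConfig.pollAux_ne_up (hl : l.Nodup) (hC : GoodConfig ε R l C) :
    pollAux ε R l C ≠ .up := by
  obtain _ | ⟨x, u⟩ := l
  · have hall : ∀ i, ∃ a, C i = .inl a := fun i ↦ Sum.isLeft_iff.1 (hC.2 i List.not_mem_nil)
    choose f hf using hall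
    rw [pollAux, dif_pos ⟨f, hf⟩]
    split <;> simp
  obtain ⟨σ, hσ⟩ := List.exists_perm_map_take_finRange hl
  rw [List.length_cons] at hσ
  have hlen : u.length + 1 ≤ n := by simpa using hl.length_le_card
  have hmem : ∀ i, σ i ∈ x :: u ↔ (i : ℕ) < u.length + 1 := fun i ↦ by
    conv_lhs => rw [← hσ]
    rw [List.mem_map_of_injective σ.injective,
      List.mem_take_iff_idxOf_lt (List.mem_finRange i), List.idxOf_finRange]
  have hgood : ∀ i : Fin n, (i : ℕ) < u.length + 1 →
      ∃ S : Finset M, C (σ i) = .inr S ∧ IsGood ε R n (.inr S) :=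
    fun i hi ↦ hC.1 _ ((hmem i).2 hi)
  have hn : 0 < n := by omega
  obtain ⟨S₀, hS₀, hgood₀⟩ := hgood ⟨0, hn⟩ (by simp)
  have h := hgood₀.of_le (k := u.length + 1) (by omega) hlen
  rw [IsGood] at h
  -- goodness of the first polled set, for the rearrangement `C ∘ σ` listing `x :: u` first
  have hne := h.2 (fun i ↦ C (σ i)) σ.symm (fun i hi ↦ ?_) (fun i hi₁ hi₂ ↦ ?_)
    (fun i hi ↦ ?_)
  · rw [pollValue, Equiv.symm_symm] at hne
    simpa only [Equiv.apply_symm_apply, hσ] using hne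
  · rw [show i = ⟨0, hn⟩ from Fin.ext hi, hS₀]
  · obtain ⟨S, hS, hSg⟩ := hgood i (by simpa using hi₂)
    rw [hS]
    exact ⟨rfl, hSg.of_le (by omega) (by omega)⟩
  · exact hC.2 _ fun h ↦ by simp [hmem] at h; omega

theorem GoodConfig.pollAux_perm (hε : ε < 1 / 4) {l' : List (Fin n)} (hp : l.Perm l')
    (hl : l.Nodup) (hC : GoodConfig ε R l C) : pollAux ε R l C = pollAux ε R l' C := by
  induction hp generalizing C with
  | nil => rfl
  | cons x _ ih =>
    obtain ⟨S, hS, -⟩ := hC.1 x List.mem_cons_self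
    have hx := (List.nodup_cons.1 hl).1
    have htail : ∀ a : M,
        pollAux ε R _ (update C x (.inl a)) = pollAux ε R _ (update C x (.inl a)) :=
      fun a ↦ ih hl.of_cons (hC.update_cons hx)
    simp only [pollAux, hS, htail]
  | swap x y u =>
    obtain ⟨Sx, hSx, -⟩ := hC.1 x (by simp)
    obtain ⟨Sy, hSy, -⟩ := hC.1 y (by simp)
    have hswap := List.Perm.swap x y u
    have hyx : y ≠ x := fun h ↦ (List.nodup_cons.1 hl).1 (by simp [h])
    exact pollAux_swap hε hyx hSy hSx (hC.pollAux_ne_up hl)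
      ((hC.perm hswap).pollAux_ne_up (hswap.nodup_iff.1 hl))
  | trans p₁ _ ih₁ ih₂ => rw [ih₁ hl hC, ih₂ (p₁.nodup_iff.1 hl) (hC.perm p₁)]

end Polling

theorem statement1_general {L : RelLanguage} {M : Type} [Fintype M] [DecidableEq M]
    (𝓜 : RelStructure L M) (E : L.Symb)
    (ε : ℝ) (hε : ε < 1 / 4)
    (A : Fin (L.arity E) → Finset M)
    (hexc : ∀ i, IsExcellent ε 𝓜 (Sum.inr (A i))) :
    ∃ v : TV, v ≠ TV.up ∧
      ∀ mbar : List (Fin (L.arity E)), mbar.Nodup → (∀ i, i ∈ mbar) →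
        partialRel ε (𝓜.rel E) mbar (fun i => Sum.inr (A i)) = v := by
  have hC : GoodConfig ε (𝓜.rel E) (List.finRange _) fun i ↦ .inr (A i) :=
    ⟨fun i _ ↦ ⟨A i, rfl, hexc i E⟩, fun i hi ↦ (hi (List.mem_finRange i)).elim⟩
  refine ⟨_, hC.pollAux_ne_up (List.nodup_finRange _), fun mbar hnd hall ↦ ?_⟩
  have hperm : (List.finRange _).Perm mbar.reverse :=
    (List.perm_ext_iff_of_nodup (List.nodup_finRange _) (List.nodup_reverse.2 hnd)).2
      fun i ↦ by simp [hall]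
  exact (hC.pollAux_perm hε hperm (List.nodup_finRange _)).symm

/-- Corollary: `Ê_ε` is well defined on excellent sets.
For any ε-excellent sets `A_0, …, A_{n-1} ∈ M̂∖M` (where `n = arity(E)`), the value
`Ê^m̄_ε(A_0,…,A_{n-1})` is a truth value (`⊤` or `⊥`), the same for every enumeration `m̄`
of `{0,…,n-1}`. -/
theorem statement1 {L : RelLanguage} {M : Type} [Fintype M] [DecidableEq M]
    (𝓜 : RelStructure L M) (E : L.Symb)
    (ε : ℝ) (hε0 : 0 < ε) (hε : ε < 1 / 4)
    (A : Fin (L.arity E) → Finset M)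
    (hexc : ∀ i, IsExcellent ε 𝓜 (Sum.inr (A i))) :
    ∃ v : TV, v ≠ TV.up ∧
      ∀ mbar : List (Fin (L.arity E)), mbar.Nodup → (∀ i, i ∈ mbar) →
        partialRel ε (𝓜.rel E) mbar (fun i => Sum.inr (A i)) = v :=
  statement1_general 𝓜 E ε hε A hexc
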